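/- arXiv:1810.09104 — 5 statements merged into one kernel-verified Lean document; each statement's English description precedes it below -/
import Mathlib

section
/- Let 0 < c < 1 and 0 < S ≤ M be reals with S < M (strict). Define ρ(M) = ((M + cS)(M - S)) / ((M + S)(M - cS)). Then ρ is strictly increasing in M on (S, ∞); equivalently, its derivative with respect to M has the same sign as 2S(1 - c)(M² - cS²), which is positive. -/
open Set

theorem crossLSH_rho_strictMono (c S : ℝ) (hc0 : 0 < c) (hc1 : c < 1) (hS : 0 < S) :
    StrictMonoOn (fun M : ℝ => ((M + c * S) * (M - S)) / ((M + S) * (M - c * S)))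
      (Ioi S) ∧
    ∀ M : ℝ, S < M → 0 < 2 * S * (1 - c) * (M ^ 2 - c * S ^ 2) := by
  constructor
  · intro M1 hM1 M2 hM2 h12
    simp only [mem_Ioi] at hM1 hM2
    have hcS : c * S < S := by nlinarith
    have hd1 : 0 < (M1 + S) * (M1 - c * S) := by
      apply mul_pos <;> nlinarith
    have hd2 : 0 < (M2 + S) * (M2 - c * S) := by
      apply mul_pos <;> nlinarith
    simp only
    rw [div_lt_div_iff₀ hd1 hd2]
    nlinarith [mul_pos (sub_pos.2 h12) (mul_pos hS (sub_pos.2 hc1)),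
      mul_pos (mul_pos (sub_pos.2 h12) (mul_pos hS (sub_pos.2 hc1)))
        (mul_pos (hS.trans hM1) (hS.trans hM2)), sq_nonneg (M1 - M2), sq_nonneg S,
      mul_pos hc0 (mul_pos hS hS), mul_pos (mul_pos (hS.trans hM1) (hS.trans hM2)) hS]
  · intro M hM
    have : S ^ 2 < M ^ 2 := by nlinarith
    have : 0 < M ^ 2 - c * S ^ 2 := by nlinarith
    have h2 : 0 < 2 * S * (1 - c) := by nlinarith
    exact mul_pos h2 this
end

section
/- Let 0 < c < 1 and 0 < S < M₁ < M₂. Then ((M₁ + cS)(M₁ - S)) / ((M₁ + S)(M₁ - cS)) < ((M₂ + cS)(M₂ - S)) / ((M₂ + S)(M₂ - cS)). -/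
theorem crossLSH_rho_lt (c S M₁ M₂ : ℝ) (hc0 : 0 < c) (hc1 : c < 1)
    (hS : 0 < S) (h1 : S < M₁) (h2 : M₁ < M₂) :
    ((M₁ + c * S) * (M₁ - S)) / ((M₁ + S) * (M₁ - c * S)) <
    ((M₂ + c * S) * (M₂ - S)) / ((M₂ + S) * (M₂ - c * S)) := by
  have hcS1 : c * S < M₁ := lt_trans (by nlinarith) h1
  have hd1 : 0 < (M₁ + S) * (M₁ - c * S) := by nlinarith
  have hd2 : 0 < (M₂ + S) * (M₂ - c * S) := by nlinarith
  rw [div_lt_div_iff₀ hd1 hd2]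
  have key : 0 < (M₂ - M₁) * ((S - c * S) * (M₁ * M₂ + c * S * S)) := by
    apply mul_pos (by linarith)
    apply mul_pos (by nlinarith)
    nlinarith [mul_pos (hS.trans h1) ((hS.trans h1).trans h2), mul_pos hc0 (mul_pos hS hS)]
  nlinarith [key]
end

section
/- Let q, x ∈ ℝ^d with ‖q‖ = 1 and ‖x‖ ≤ 1, and let P(y) = (y, √(1 - ‖y‖²)). Then ‖P(x) - P(q)‖ = √(2 - 2⟨q, x⟩). In particular, for x, y with ‖x‖, ‖y‖ ≤ 1, ⟨q, x⟩ > ⟨q, y⟩ implies ‖P(x) - P(q)‖ < ‖P(y) - P(q)‖. -/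
open Real RealInnerProductSpace

noncomputable def simpleLSH {d : ℕ} (y : EuclideanSpace ℝ (Fin d)) :
    EuclideanSpace ℝ (Fin (d + 1)) :=
  (EuclideanSpace.equiv (Fin (d + 1)) ℝ).symm
    (Fin.snoc (EuclideanSpace.equiv (Fin d) ℝ y) (Real.sqrt (1 - ‖y‖ ^ 2)))

lemma simpleLSH_normsq {d : ℕ} (q x : EuclideanSpace ℝ (Fin d)) (hq : ‖q‖ = 1)
    (hx : ‖x‖ ≤ 1) :
    ‖simpleLSH x - simpleLSH q‖ ^ 2 = 2 - 2 * ⟪q, x⟫ := by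
  have hxs : ‖x‖ ^ 2 ≤ 1 := by nlinarith [norm_nonneg x]
  have h1 : ∀ y : EuclideanSpace ℝ (Fin d), ∀ i : Fin d,
      simpleLSH y i.castSucc = y i := by
    intro y i
    simp [simpleLSH, Fin.snoc_castSucc]
  have h2 : ∀ y : EuclideanSpace ℝ (Fin d),
      simpleLSH y (Fin.last d) = Real.sqrt (1 - ‖y‖ ^ 2) := by
    intro y
    simp [simpleLSH]
  have hnorm : ‖simpleLSH x - simpleLSH q‖ ^ 2
      = ∑ i : Fin (d + 1), (simpleLSH x i - simpleLSH q i) ^ 2 := by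
    rw [EuclideanSpace.norm_eq, Real.sq_sqrt (by positivity)]
    simp [sq_abs]
  rw [hnorm, Fin.sum_univ_castSucc]
  have hqlast : simpleLSH q (Fin.last d) = 0 := by
    rw [h2, hq]; simp
  have hxsum : ∑ i : Fin d, (x i - q i) ^ 2 = ‖x‖^2 - 2 * ⟪q, x⟫ + ‖q‖^2 := by
    have hx2 : ‖x‖ ^ 2 = ∑ i, x i ^ 2 := by
      rw [EuclideanSpace.norm_eq, Real.sq_sqrt (by positivity)]; simp [sq_abs]
    have hq2 : ‖q‖ ^ 2 = ∑ i, q i ^ 2 := by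
      rw [EuclideanSpace.norm_eq, Real.sq_sqrt (by positivity)]; simp [sq_abs]
    have hiq : ⟪q, x⟫ = ∑ i, q i * x i := by
      simp [PiLp.inner_apply, RCLike.inner_apply, mul_comm]
    rw [hx2, hq2, hiq, Finset.mul_sum, ← Finset.sum_sub_distrib,
      ← Finset.sum_add_distrib]
    exact Finset.sum_congr rfl fun i _ => by ring
  simp only [h1, h2, hq]
  rw [hxsum, hq]
  have h0 : Real.sqrt (1 - 1 ^ 2) = 0 := by norm_num
  rw [h0, sub_zero, Real.sq_sqrt (by linarith)]
  ring

theorem simpleLSH_dist (d : ℕ) (q : EuclideanSpace ℝ (Fin d)) (hq : ‖q‖ = 1) :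
    (∀ x : EuclideanSpace ℝ (Fin d), ‖x‖ ≤ 1 →
      ‖simpleLSH x - simpleLSH q‖ = Real.sqrt (2 - 2 * ⟪q, x⟫)) ∧
    (∀ x y : EuclideanSpace ℝ (Fin d), ‖x‖ ≤ 1 → ‖y‖ ≤ 1 →
      ⟪q, x⟫ > ⟪q, y⟫ → ‖simpleLSH x - simpleLSH q‖ < ‖simpleLSH y - simpleLSH q‖) := by
  have key : ∀ x : EuclideanSpace ℝ (Fin d), ‖x‖ ≤ 1 →
      ‖simpleLSH x - simpleLSH q‖ = Real.sqrt (2 - 2 * ⟪q, x⟫) := by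
    intro x hx
    rw [← simpleLSH_normsq q x hq hx, Real.sqrt_sq (norm_nonneg _)]
  refine ⟨key, fun x y hx hy hlt => ?_⟩
  rw [key x hx, key y hy]
  have h2 : 2 - 2 * ⟪q, x⟫ = ‖simpleLSH x - simpleLSH q‖ ^ 2 :=
    (simpleLSH_normsq q x hq hx).symm
  have hnn : 0 ≤ 2 - 2 * ⟪q, x⟫ := h2 ▸ sq_nonneg _
  apply Real.sqrt_lt_sqrt hnn
  linarith
end

section
/- Let 0 < c < 1 and suppose P(x) = (x, √(1 - ‖x‖²)) is the Simple-LSH transformation applied to vectors normalized so that ‖x‖ ≤ 1 with global bound M (i.e., x replaced by x/M). Then an (S, c)-MIPS instance is transformed into an angular similarity instance with cosine similarities S/M and cS/M: if ⟨q, x⟩ ≥ S then the cosine similarity of P(q) and P(x/M) is ≥ S/M, and if ⟨q, x⟩ ≤ cS then it is ≤ cS/M. -/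
open Real RealInnerProductSpace

/-! `simpleLSH` maps the closed unit ball into the unit sphere, and for a unit vector `q` the
appended coordinate `√(1 - ‖q‖²)` of `simpleLSH q` vanishes. Hence the cosine similarity of
`simpleLSH q` and `simpleLSH y` is exactly `⟪q, y⟫`; for `y = x / M` this is `⟪q, x⟫ / M`, and
both bounds follow by dividing by `M ≥ 0`. -/

lemma inner_simpleLSH {d : ℕ} (a b : EuclideanSpace ℝ (Fin d)) :
    ⟪simpleLSH a, simpleLSH b⟫ = ⟪a, b⟫ + √(1 - ‖a‖ ^ 2) * √(1 - ‖b‖ ^ 2) := by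
  simp only [simpleLSH, PiLp.continuousLinearEquiv_symm_apply, PiLp.continuousLinearEquiv_apply,
    PiLp.inner_apply, RCLike.inner_apply, ringHom_apply, Fin.sum_univ_castSucc, Fin.snoc_castSucc,
    Fin.snoc_last, add_right_inj]
  ring

lemma inner_simpleLSH_of_norm_eq_one {d : ℕ} {a : EuclideanSpace ℝ (Fin d)} (ha : ‖a‖ = 1)
    (b : EuclideanSpace ℝ (Fin d)) : ⟪simpleLSH a, simpleLSH b⟫ = ⟪a, b⟫ := by
  simp [inner_simpleLSH, ha]

lemma norm_simpleLSH {d : ℕ} {y : EuclideanSpace ℝ (Fin d)} (hy : ‖y‖ ≤ 1) :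
    ‖simpleLSH y‖ = 1 := by
  have hsq : 0 ≤ 1 - ‖y‖ ^ 2 := by nlinarith [norm_nonneg y]
  have hself := inner_simpleLSH y y
  rw [real_inner_self_eq_norm_sq, real_inner_self_eq_norm_sq, mul_self_sqrt hsq,
    add_sub_cancel] at hself
  exact (pow_eq_one_iff_of_nonneg (norm_nonneg _) two_ne_zero).mp hself

lemma cos_simpleLSH {d : ℕ} {q y : EuclideanSpace ℝ (Fin d)} (hq : ‖q‖ = 1) (hy : ‖y‖ ≤ 1) :
    ⟪simpleLSH q, simpleLSH y⟫ / (‖simpleLSH q‖ * ‖simpleLSH y‖) = ⟪q, y⟫ := by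
  rw [inner_simpleLSH_of_norm_eq_one hq, norm_simpleLSH hq.le, norm_simpleLSH hy, mul_one,
    div_one]

lemma norm_one_div_smul_le_one {E : Type*} [NormedAddCommGroup E] [NormedSpace ℝ E] {x : E}
    {M : ℝ} (hx : ‖x‖ ≤ M) : ‖(1 / M) • x‖ ≤ 1 := by
  rw [norm_smul, norm_div, norm_one, Real.norm_of_nonneg ((norm_nonneg x).trans hx),
    one_div_mul_eq_div]
  exact div_le_one_of_le₀ hx ((norm_nonneg x).trans hx)

theorem simpleLSH_transform_mips_general (d : ℕ) (c S M : ℝ) (q x : EuclideanSpace ℝ (Fin d))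
    (hq : ‖q‖ = 1) (hx : ‖x‖ ≤ M) :
    (⟪q, x⟫ ≥ S →
      ⟪simpleLSH q, simpleLSH ((1 / M) • x)⟫ /
        (‖simpleLSH q‖ * ‖simpleLSH ((1 / M) • x)‖) ≥ S / M) ∧
    (⟪q, x⟫ ≤ c * S →
      ⟪simpleLSH q, simpleLSH ((1 / M) • x)⟫ /
        (‖simpleLSH q‖ * ‖simpleLSH ((1 / M) • x)‖) ≤ c * S / M) := by
  have hM : 0 ≤ M := (norm_nonneg x).trans hx
  rw [cos_simpleLSH hq (norm_one_div_smul_le_one hx), real_inner_smul_right, one_div_mul_eq_div]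
  exact ⟨fun h => div_le_div_of_nonneg_right h hM, fun h => div_le_div_of_nonneg_right h hM⟩

theorem simpleLSH_transform_mips (d : ℕ) (c S M : ℝ) (q x : EuclideanSpace ℝ (Fin d))
    (hc0 : 0 < c) (hc1 : c < 1) (hM : 0 < M) (hq : ‖q‖ = 1) (hx : ‖x‖ ≤ M) :
    (⟪q, x⟫ ≥ S →
      ⟪simpleLSH q, simpleLSH ((1 / M) • x)⟫ /
        (‖simpleLSH q‖ * ‖simpleLSH ((1 / M) • x)‖) ≥ S / M) ∧
    (⟪q, x⟫ ≤ c * S →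
      ⟪simpleLSH q, simpleLSH ((1 / M) • x)⟫ /
        (‖simpleLSH q‖ * ‖simpleLSH ((1 / M) • x)‖) ≤ c * S / M) :=
  simpleLSH_transform_mips_general d c S M q x hq hx
end

section
/- Let 0 < c < 1 and fix c. Define f(x) = ln(1 - arccos(x)/π) for x ∈ (0, 1) and ρ(x) = f(x)/f(cx). Then ρ is strictly decreasing on (0, 1). -/
/-!
Write `p x = 1 - arccos x / π` (`collisionProb`), so that `ρ x = log (p x) / log (p (c x))` with both logarithms
negative, and `log ρ x = log |log (p x)| - log |log (p (c x))|`. Since `√(1 - x²) = sin (π p x)`,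
the derivative of `log |log (p x)|` is `1 / (π B (p x))` with `B s = s sin (π s) log s`.
As `B` is negative and increasing on `[1/2, 1]` and `1/2 < p (c x) < p x < 1`, we get
`B (p (c x)) < B (p x) < c B (p x)`, which is exactly the statement that the derivative
`1 / (π B (p x)) - c / (π B (p (c x)))` of `log ρ` is negative.
-/

open Real Set

noncomputable def collisionProb (x : ℝ) : ℝ := 1 - arccos x / π

@[simp] lemma collisionProb_zero : collisionProb 0 = 1 / 2 := by
  simp only [collisionProb, arccos_zero]
  field_simp
  norm_num

@[simp] lemma collisionProb_one : collisionProb 1 = 1 := by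
  simp [collisionProb]

@[simp] lemma collisionProb_neg_one : collisionProb (-1) = 0 := by
  simp [collisionProb, arccos_neg_one, pi_ne_zero]

lemma strictMonoOn_collisionProb : StrictMonoOn collisionProb (Icc (-1) 1) := by
  intro x hx y hy hxy
  have := strictAntiOn_arccos hx hy hxy
  unfold collisionProb
  gcongr

lemma collisionProb_mem_Ioo_zero_one {x : ℝ} (hx : x ∈ Ioo (-1) 1) :
    collisionProb x ∈ Ioo 0 1 := by
  simpa using strictMonoOn_collisionProb.mapsTo_Ioo hx

lemma collisionProb_mem_Ioo_half_one {x : ℝ} (hx : x ∈ Ioo 0 1) :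
    collisionProb x ∈ Ioo (1 / 2) 1 := by
  simpa using (strictMonoOn_collisionProb.mono (Icc_subset_Icc (by norm_num) le_rfl)).mapsTo_Ioo hx

lemma sin_pi_mul_collisionProb (x : ℝ) : sin (π * collisionProb x) = √(1 - x ^ 2) := by
  rw [collisionProb, mul_sub, mul_one, mul_div_cancel₀ _ pi_ne_zero, sin_pi_sub, sin_arccos]

lemma hasDerivAt_collisionProb {x : ℝ} (h₁ : x ≠ -1) (h₂ : x ≠ 1) :
    HasDerivAt collisionProb (1 / (π * √(1 - x ^ 2))) x :=
  (((hasDerivAt_arccos h₁ h₂).div_const π).const_sub 1).congr_deriv (by ring)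

lemma hasDerivAt_log_log_collisionProb {x : ℝ} (hx : x ∈ Ioo (-1) 1) :
    HasDerivAt (fun y => log (log (collisionProb y)))
      (1 / (π * (collisionProb x * sin (π * collisionProb x) * log (collisionProb x)))) x := by
  have hp := collisionProb_mem_Ioo_zero_one hx
  refine (((hasDerivAt_collisionProb hx.1.ne' hx.2.ne).log hp.1.ne').log
    (log_neg hp.1 hp.2).ne).congr_deriv ?_
  rw [sin_pi_mul_collisionProb]
  ring

lemma hasDerivAt_mul_sin_pi_mul_mul_log {s : ℝ} (hs : s ≠ 0) :
    HasDerivAt (fun s => s * sin (π * s) * log s)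
      (sin (π * s) * (1 + log s) + π * s * cos (π * s) * log s) s := by
  have hsin : HasDerivAt (fun s => sin (π * s)) (cos (π * s) * π) s := by
    simpa using ((hasDerivAt_id s).const_mul π).sin
  refine (((hasDerivAt_id s).mul hsin).mul (hasDerivAt_log hs)).congr_deriv ?_
  simp only [id, Pi.mul_apply]
  field_simp
  ring

lemma strictMonoOn_mul_sin_pi_mul_mul_log :
    StrictMonoOn (fun s => s * sin (π * s) * log s) (Icc (1 / 2) 1) := by
  refine strictMonoOn_of_deriv_pos (convex_Icc _ _) (fun s hs => ?_) fun s hs => ?_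
  · exact (hasDerivAt_mul_sin_pi_mul_mul_log (by linarith [hs.1] : (0 : ℝ) < s).ne')
      |>.continuousAt.continuousWithinAt
  rw [interior_Icc] at hs
  have hs0 : 0 < s := by linarith [hs.1]
  rw [(hasDerivAt_mul_sin_pi_mul_mul_log hs0.ne').deriv]
  have hsin : 0 < sin (π * s) :=
    sin_pos_of_pos_of_lt_pi (by positivity) (by nlinarith [pi_pos, hs.2])
  have hcos : cos (π * s) < 0 :=
    cos_neg_of_pi_div_two_lt_of_lt (by nlinarith [pi_pos, hs.1]) (by nlinarith [pi_pos, hs.2])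
  have hlog : log s < 0 := log_neg hs0 hs.2
  have hlog_gt : -1 < log s := by
    have := log_lt_log (by norm_num) hs.1
    rw [one_div, log_inv] at this
    linarith [log_two_lt_d9]
  have hcos_log : 0 < π * s * (cos (π * s) * log s) :=
    mul_pos (by positivity) (mul_pos_of_neg_of_neg hcos hlog)
  nlinarith [mul_pos hsin (show 0 < 1 + log s by linarith)]

lemma strictAntiOn_log_log_collisionProb_sub {c : ℝ} (hc0 : 0 < c) (hc1 : c < 1) :
    StrictAntiOn (fun x => log (log (collisionProb x)) - log (log (collisionProb (c * x))))
      (Ioo 0 1) := by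
  have hcx : ∀ x ∈ Ioo (0 : ℝ) 1, c * x ∈ Ioo 0 1 := fun x hx =>
    ⟨mul_pos hc0 hx.1, by nlinarith [hx.1, hx.2]⟩
  have hmem : ∀ x ∈ Ioo (0 : ℝ) 1, x ∈ Ioo (-1) 1 := fun x hx => ⟨by linarith [hx.1], hx.2⟩
  have hderiv : ∀ x ∈ Ioo (0 : ℝ) 1, HasDerivAt
      (fun x => log (log (collisionProb x)) - log (log (collisionProb (c * x))))
      (1 / (π * (collisionProb x * sin (π * collisionProb x) * log (collisionProb x))) -
        1 / (π * (collisionProb (c * x) * sin (π * collisionProb (c * x)) *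
          log (collisionProb (c * x)))) * c) x := fun x hx =>
    (hasDerivAt_log_log_collisionProb (hmem x hx)).sub <|
      (hasDerivAt_log_log_collisionProb (hmem _ (hcx x hx))).comp x
        (by simpa using (hasDerivAt_id x).const_mul c)
  refine strictAntiOn_of_deriv_neg (convex_Ioo 0 1)
    (fun x hx => (hderiv x hx).continuousAt.continuousWithinAt) fun x hx => ?_
  rw [interior_Ioo] at hx
  rw [(hderiv x hx).deriv]
  set t := collisionProb x
  set r := collisionProb (c * x)
  have ht := collisionProb_mem_Ioo_half_one hx
  have hr := collisionProb_mem_Ioo_half_one (hcx x hx)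
  have hrt : r * sin (π * r) * log r < t * sin (π * t) * log t :=
    strictMonoOn_mul_sin_pi_mul_mul_log (Ioo_subset_Icc_self hr) (Ioo_subset_Icc_self ht) <|
      strictMonoOn_collisionProb (Ioo_subset_Icc_self (hmem _ (hcx x hx)))
        (Ioo_subset_Icc_self (hmem x hx)) (by nlinarith [hx.1])
  have ht_neg : t * sin (π * t) * log t < 0 := by
    have hsin : 0 < sin (π * t) := by
      rw [sin_pi_mul_collisionProb]
      exact sqrt_pos.2 (by nlinarith [hx.1, hx.2])
    exact mul_neg_of_pos_of_neg (mul_pos (by linarith [ht.1]) hsin)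
      (log_neg (by linarith [ht.1]) ht.2)
  have hinv := one_div_lt_one_div_of_neg_of_lt (mul_neg_of_pos_of_neg pi_pos ht_neg)
    (mul_lt_mul_of_pos_left hrt pi_pos)
  have hr_inv_neg : 1 / (π * (r * sin (π * r) * log r)) < 0 :=
    one_div_neg.2 (mul_neg_of_pos_of_neg pi_pos (hrt.trans ht_neg))
  nlinarith

theorem simpleLSH_rho_strictAnti (c : ℝ) (hc0 : 0 < c) (hc1 : c < 1) :
    StrictAntiOn
      (fun x : ℝ =>
        Real.log (1 - Real.arccos x / π) / Real.log (1 - Real.arccos (c * x) / π))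
      (Ioo (0 : ℝ) 1) := by
  have hlog_neg : ∀ x ∈ Ioo (0 : ℝ) 1, log (collisionProb x) < 0 := fun x hx =>
    have h := collisionProb_mem_Ioo_half_one hx
    log_neg (by linarith [h.1]) h.2
  have hcx : ∀ x ∈ Ioo (0 : ℝ) 1, c * x ∈ Ioo 0 1 := fun x hx =>
    ⟨mul_pos hc0 hx.1, by nlinarith [hx.1, hx.2]⟩
  intro a ha b hb hab
  change log (collisionProb b) / log (collisionProb (c * b)) <
    log (collisionProb a) / log (collisionProb (c * a))
  rw [← log_lt_log_iff (div_pos_of_neg_of_neg (hlog_neg b hb) (hlog_neg _ (hcx b hb)))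
      (div_pos_of_neg_of_neg (hlog_neg a ha) (hlog_neg _ (hcx a ha))),
    log_div (hlog_neg b hb).ne (hlog_neg _ (hcx b hb)).ne,
    log_div (hlog_neg a ha).ne (hlog_neg _ (hcx a ha)).ne]
  exact strictAntiOn_log_log_collisionProb_sub hc0 hc1 ha hb hab
end
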